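/- Assume ν ∈ 𝒫₂(ℝ^d) is not a Dirac mass. Then for every μ ∈ 𝒫₂(ℝ^d) there exists a sequence (μₙ) in 𝒫₂(ℝ^d) with W₂(μₙ, μ) → 0 and such that for each n there is no measurable Tₙ : ℝ^d → ℝ^d with the set of W₂-optimal couplings between μₙ and ν equal to {(Id,Tₙ)#μₙ}. -/

import Mathlib

open MeasureTheory ProbabilityTheory Set Filter
open scoped ENNReal BoundedContinuousFunction

noncomputable section

abbrev Ed (d : ℕ) := EuclideanSpace ℝ (Fin d)

/-- π is a coupling of μ and ν. -/
def IsCoupling {d : ℕ} (π : Measure (Ed d × Ed d)) (μ ν : Measure (Ed d)) : Prop :=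
  π.map Prod.fst = μ ∧ π.map Prod.snd = ν

/-- quadratic transport cost of a coupling. -/
def cost {d : ℕ} (π : Measure (Ed d × Ed d)) : ℝ := ∫ p, ‖p.2 - p.1‖ ^ 2 ∂π

/-- squared quadratic Wasserstein distance. -/
def W2sq {d : ℕ} (μ ν : Measure (Ed d)) : ℝ := sInf (cost '' {π | IsCoupling π μ ν})

/-- π is a W₂-optimal coupling between μ and ν. -/
def IsOptimalCoupling {d : ℕ} (π : Measure (Ed d × Ed d)) (μ ν : Measure (Ed d)) : Prop :=
  IsCoupling π μ ν ∧ cost π = W2sq μ ν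

/-- the coupling (Id, T)#μ given by a map T. -/
def givenByMap {d : ℕ} (μ : Measure (Ed d)) (T : Ed d → Ed d) : Measure (Ed d × Ed d) :=
  μ.map (fun x => (x, T x))

/-- finite second moment. -/
def FiniteSecondMoment {d : ℕ} (μ : Measure (Ed d)) : Prop :=
  Integrable (fun x => ‖x‖ ^ 2) μ

/-- convex order: ∫φ dη ≤ ∫φ dν for all convex φ whose integrals make sense. -/
def ConvexOrder {d : ℕ} (η ν : Measure (Ed d)) : Prop :=
  ∀ φ : Ed d → ℝ, ConvexOn ℝ Set.univ φ → Integrable φ η → Integrable φ ν →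
    ∫ x, φ x ∂η ≤ ∫ y, φ y ∂ν

open Topology

/-!
A map `T` inducing an optimal coupling would push `μₙ` forward to `ν`, so it suffices that
`μₙ (T⁻¹' B) = ν B` is impossible for a fixed measurable `B` with `0 < ν B < 1`; such a `B` exists
because a probability measure on a standard Borel space taking only the values `0` and `1` is a
Dirac mass. Take `μₙ = (1 - ε) g#μ + ε δ₀` with `g` a simple function close to the identity in
`L²(μ)`. Then `g#μ` takes only finitely many values `s`, every value of `μₙ` is of the form
`(1 - ε) s + ε e` with `e ∈ {0, 1}`, and all small enough `ε > 0` avoid `ν B`; meanwhile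
`W₂²(μₙ, μ) ≤ ‖id - g‖²_{L²(μ)} + ε ∫ ‖x‖² dμ` is small.
-/

theorem MeasureTheory.Measure.exists_measurableSet_measure_pos_lt_one {α : Type*}
    [MeasurableSpace α] [StandardBorelSpace α] (ν : Measure α) [IsProbabilityMeasure ν]
    (h : ¬ ∃ x, ν = Measure.dirac x) :
    ∃ B, MeasurableSet B ∧ 0 < ν B ∧ ν B < 1 := by
  by_contra! hB
  have : IsZeroOneMeasure ν := ⟨fun s hs => by
    rcases (zero_le : 0 ≤ ν s).eq_or_lt with h0 | h0
    · exact .inl h0.symm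
    · exact .inr (le_antisymm prob_le_one (hB s hs h0))⟩
  exact h IsZeroOneMeasure.exists_eq_dirac

theorem finite_setOf_lineMap_eq {S E : Set ℝ} (hS : S.Finite) (hE : E.Finite) {β : ℝ}
    (hβ : β ∉ E) : {ε : ℝ | ∃ s ∈ S, ∃ e ∈ E, AffineMap.lineMap s e ε = β}.Finite := by
  refine (hS.biUnion fun s _ => hE.biUnion fun e _ =>
    finite_singleton ((β - s) / (e - s))).subset ?_
  rintro ε ⟨s, hs, e, he, hε⟩
  rw [AffineMap.lineMap_apply_ring] at hε
  have hse : e - s ≠ 0 := by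
    rintro h
    obtain rfl : e = s := by linarith
    exact hβ ((by linarith : e = β) ▸ he)
  simp only [mem_iUnion, mem_singleton_iff]
  exact ⟨s, hs, e, he, by field_simp; linarith⟩

theorem MeasureTheory.SimpleFunc.finite_range_measure_preimage {α β : Type*} [MeasurableSpace α]
    (μ : Measure α) (g : SimpleFunc α β) : (range fun C : Set β => μ (g ⁻¹' C)).Finite := by
  classical
  refine ((g.range.powerset.finite_toSet).image fun J : Finset β => μ (g ⁻¹' J)).subset ?_
  rintro _ ⟨C, rfl⟩
  refine ⟨g.range.filter (· ∈ C), Finset.mem_powerset.2 (Finset.filter_subset _ _), ?_⟩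
  refine congrArg μ (Set.ext fun x => ?_)
  simp

def mixDirac {α : Type*} [MeasurableSpace α] (ρ : Measure α) (x : α) (ε : ℝ) : Measure α :=
  ENNReal.ofReal (1 - ε) • ρ + ENNReal.ofReal ε • Measure.dirac x

section mixDirac

variable {α : Type*} [MeasurableSpace α] {ρ : Measure α} {x : α} {ε : ℝ}

theorem isProbabilityMeasure_mixDirac [IsProbabilityMeasure ρ] (hε0 : 0 ≤ ε) (hε1 : ε ≤ 1) :
    IsProbabilityMeasure (mixDirac ρ x ε) := by
  constructor
  simp only [mixDirac, Measure.add_apply, Measure.smul_apply, measure_univ, smul_eq_mul, mul_one]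
  rw [← ENNReal.ofReal_add (by linarith) hε0, sub_add_cancel, ENNReal.ofReal_one]

theorem toReal_mixDirac_apply [IsFiniteMeasure ρ] (hε0 : 0 ≤ ε) (hε1 : ε ≤ 1) (C : Set α) :
    (mixDirac ρ x ε C).toReal =
      (1 - ε) * (ρ C).toReal + ε * (Measure.dirac x C).toReal := by
  simp only [mixDirac, Measure.add_apply, Measure.smul_apply, smul_eq_mul]
  rw [ENNReal.toReal_add (by finiteness) (by finiteness), ENNReal.toReal_mul,
    ENNReal.toReal_mul, ENNReal.toReal_ofReal (by linarith), ENNReal.toReal_ofReal hε0]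

theorem eventually_mixDirac_apply_ne [IsFiniteMeasure ρ]
    (hρ : (range fun C : {C : Set α // MeasurableSet C} => ρ C).Finite) (x : α)
    {β : ℝ≥0∞} (hβ0 : 0 < β) (hβ1 : β < 1) :
    ∀ᶠ ε in 𝓝[>] 0, ∀ C, MeasurableSet C → mixDirac ρ x ε C ≠ β := by
  have hβ : β.toReal ∉ ({0, 1} : Set ℝ) := by
    have := ENNReal.toReal_lt_toReal (by finiteness) ENNReal.one_ne_top |>.mpr hβ1
    have := ENNReal.toReal_pos hβ0.ne' (by finiteness)
    simp only [mem_insert_iff, mem_singleton_iff, not_or]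
    constructor <;> (intro h; simp_all)
  have hbad := finite_setOf_lineMap_eq (hρ.image ENNReal.toReal) (toFinite {0, 1}) hβ
  have hcofinite : 𝓝[>] (0 : ℝ) ≤ cofinite :=
    (nhdsWithin_mono 0 fun _ h => ne_of_gt h).trans (nhdsNE_le_cofinite 0)
  filter_upwards [hcofinite hbad.compl_mem_cofinite, Ioo_mem_nhdsGT one_pos]
    with ε hεgood ⟨hε0, hε1⟩ C hC hCβ
  refine hεgood ⟨(ρ C).toReal, ⟨ρ C, ⟨⟨C, hC⟩, rfl⟩, rfl⟩, (Measure.dirac x C).toReal, ?_, ?_⟩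
  · rcases Measure.dirac_apply_eq_zero_or_one (a := x) (s := C) with h | h <;> simp [h]
  · rw [AffineMap.lineMap_apply_ring, ← toReal_mixDirac_apply hε0.le hε1.le, hCβ]

end mixDirac

theorem MeasureTheory.MemLp.exists_simpleFunc_integral_norm_sub_sq_lt {α E : Type*}
    [MeasurableSpace α] [NormedAddCommGroup E] {μ : Measure α} {f : α → E} (hf : MemLp f 2 μ)
    {δ : ℝ} (hδ : 0 < δ) :
    ∃ g : SimpleFunc α E,
      Integrable (fun x => ‖f x - g x‖ ^ 2) μ ∧ ∫ x, ‖f x - g x‖ ^ 2 ∂μ < δ := by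
  obtain ⟨g, hg, hgmem⟩ := hf.exists_simpleFunc_eLpNorm_sub_lt (by norm_num)
    (ENNReal.ofReal_pos.2 (Real.sqrt_pos.2 hδ)).ne'
  have hdiff := hf.sub hgmem
  refine ⟨g, (memLp_two_iff_integrable_sq_norm hdiff.1).1 hdiff, ?_⟩
  rw [hdiff.eLpNorm_eq_integral_rpow_norm two_ne_zero ENNReal.ofNat_ne_top,
    ENNReal.ofReal_lt_ofReal_iff (Real.sqrt_pos.2 hδ)] at hg
  simp only [ENNReal.toReal_ofNat, Real.rpow_two, Pi.sub_apply] at hg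
  rwa [inv_eq_one_div, ← Real.sqrt_eq_rpow,
    Real.sqrt_lt_sqrt_iff (integral_nonneg fun _ => by positivity)] at hg

section Transport

variable {d : ℕ}

theorem cost_nonneg (π : Measure (Ed d × Ed d)) : 0 ≤ cost π :=
  integral_nonneg fun _ => by positivity

theorem W2sq_nonneg (μ ν : Measure (Ed d)) : 0 ≤ W2sq μ ν :=
  Real.sInf_nonneg (by rintro _ ⟨π, -, rfl⟩; exact cost_nonneg π)

theorem IsCoupling.W2sq_le_cost {π : Measure (Ed d × Ed d)} {μ ν : Measure (Ed d)}
    (h : IsCoupling π μ ν) : W2sq μ ν ≤ cost π :=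
  csInf_le ⟨0, by rintro _ ⟨π, -, rfl⟩; exact cost_nonneg π⟩ ⟨π, h, rfl⟩

theorem IsCoupling.map_eq_of_givenByMap {μ ν : Measure (Ed d)} {T : Ed d → Ed d}
    (hT : Measurable T) (h : IsCoupling (givenByMap μ T) μ ν) : μ.map T = ν := by
  rw [← h.2, givenByMap, Measure.map_map measurable_snd (by fun_prop)]
  rfl

theorem isCoupling_map_prodMk (μ : Measure (Ed d)) {f : Ed d → Ed d} (hf : Measurable f) :
    IsCoupling (μ.map fun y => (f y, y)) (μ.map f) μ := by
  constructor
  · rw [Measure.map_map measurable_fst (by fun_prop)]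
    rfl
  · rw [Measure.map_map measurable_snd (by fun_prop)]
    exact Measure.map_id

theorem IsCoupling.add_smul {π₁ π₂ : Measure (Ed d × Ed d)} {μ₁ μ₂ ν : Measure (Ed d)}
    (h₁ : IsCoupling π₁ μ₁ ν) (h₂ : IsCoupling π₂ μ₂ ν) {a b : ℝ≥0∞} (hab : a + b = 1) :
    IsCoupling (a • π₁ + b • π₂) (a • μ₁ + b • μ₂) ν := by
  constructor
  · rw [Measure.map_add _ _ measurable_fst, Measure.map_smul, Measure.map_smul, h₁.1, h₂.1]
  · rw [Measure.map_add _ _ measurable_snd, Measure.map_smul, Measure.map_smul, h₁.2, h₂.2,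
      ← _root_.add_smul, hab, one_smul]

theorem cost_map_prodMk (μ : Measure (Ed d)) {f : Ed d → Ed d} (hf : Measurable f) :
    cost (μ.map fun y => (f y, y)) = ∫ y, ‖y - f y‖ ^ 2 ∂μ :=
  integral_map (hf.prodMk measurable_id).aemeasurable (by fun_prop)

theorem integrable_cost_map_prodMk {μ : Measure (Ed d)} {f : Ed d → Ed d} (hf : Measurable f)
    (h : Integrable (fun y => ‖y - f y‖ ^ 2) μ) :
    Integrable (fun p : Ed d × Ed d => ‖p.2 - p.1‖ ^ 2) (μ.map fun y => (f y, y)) :=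
  (integrable_map_measure (by fun_prop) (hf.prodMk measurable_id).aemeasurable).2 h

theorem W2sq_mixDirac_map_le (μ : Measure (Ed d)) [IsProbabilityMeasure μ]
    (hμ : FiniteSecondMoment μ) {g : Ed d → Ed d} (hg : Measurable g)
    (hgμ : Integrable (fun y => ‖y - g y‖ ^ 2) μ) {ε : ℝ} (hε0 : 0 ≤ ε) (hε1 : ε ≤ 1) :
    W2sq (mixDirac (μ.map g) 0 ε) μ ≤ ∫ y, ‖y - g y‖ ^ 2 ∂μ + ε * ∫ y, ‖y‖ ^ 2 ∂μ := by
  have h0 : Measurable fun _ : Ed d => (0 : Ed d) := measurable_const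
  have hcoupling := (isCoupling_map_prodMk μ hg).add_smul (isCoupling_map_prodMk μ h0)
    (a := ENNReal.ofReal (1 - ε)) (b := ENNReal.ofReal ε)
    (by rw [← ENNReal.ofReal_add (by linarith) hε0, sub_add_cancel, ENNReal.ofReal_one])
  rw [Measure.map_const, measure_univ, one_smul] at hcoupling
  refine hcoupling.W2sq_le_cost.trans ?_
  have hμ' : Integrable (fun y => ‖y - (fun _ => (0 : Ed d)) y‖ ^ 2) μ := by
    simpa [FiniteSecondMoment] using hμ
  rw [cost, integral_add_measure ((integrable_cost_map_prodMk hg hgμ).smul_measure (by simp))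
      ((integrable_cost_map_prodMk h0 hμ').smul_measure (by simp)),
    integral_smul_measure, integral_smul_measure, ← cost, ← cost, cost_map_prodMk μ hg,
    cost_map_prodMk μ h0, ENNReal.toReal_ofReal (by linarith), ENNReal.toReal_ofReal hε0]
  simp only [sub_zero, smul_eq_mul]
  have : 0 ≤ ∫ y, ‖y - g y‖ ^ 2 ∂μ := integral_nonneg fun _ => by positivity
  nlinarith

theorem FiniteSecondMoment.mixDirac {ρ : Measure (Ed d)} (h : FiniteSecondMoment ρ)
    (x : Ed d) (ε : ℝ) : FiniteSecondMoment (mixDirac ρ x ε) :=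
  (h.smul_measure ENNReal.ofReal_ne_top).add_measure
    ((integrable_dirac enorm_lt_top).smul_measure ENNReal.ofReal_ne_top)

theorem finiteSecondMoment_map_simpleFunc {α : Type*} [MeasurableSpace α]
    (μ : Measure α) [IsFiniteMeasure μ] (g : SimpleFunc α (Ed d)) :
    FiniteSecondMoment (μ.map g) := by
  refine (integrable_map_measure (by fun_prop) g.measurable.aemeasurable).2 ?_
  rw [← SimpleFunc.coe_map]
  exact (g.map _).integrable_of_isFiniteMeasure

end Transport

theorem exists_W2sq_lt_forall_measure_ne {d : ℕ} (μ : Measure (Ed d)) [IsProbabilityMeasure μ]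
    (hμ : FiniteSecondMoment μ) {β : ℝ≥0∞} (hβ0 : 0 < β) (hβ1 : β < 1) {δ : ℝ} (hδ : 0 < δ) :
    ∃ μ', IsProbabilityMeasure μ' ∧ FiniteSecondMoment μ' ∧ W2sq μ' μ < δ ∧
      ∀ C, MeasurableSet C → μ' C ≠ β := by
  have hid : MemLp id 2 μ := (memLp_two_iff_integrable_sq_norm aestronglyMeasurable_id).2 hμ
  obtain ⟨g, hgint, hglt⟩ := hid.exists_simpleFunc_integral_norm_sub_sq_lt (half_pos hδ)
  set M := ∫ y, ‖y‖ ^ 2 ∂μ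
  have hM : 0 ≤ M := integral_nonneg fun _ => by positivity
  have hvalues : (range fun C : {C : Set (Ed d) // MeasurableSet C} => μ.map g C).Finite :=
    (g.finite_range_measure_preimage μ).subset <| by
      rintro _ ⟨⟨C, hC⟩, rfl⟩
      exact ⟨C, (Measure.map_apply g.measurable hC).symm⟩
  have hgood : ∀ᶠ ε in 𝓝[>] (0 : ℝ), (∀ C, MeasurableSet C → mixDirac (μ.map g) 0 ε C ≠ β) ∧
      0 < ε ∧ ε < 1 ∧ ε < δ / (2 * (M + 1)) := by
    filter_upwards [eventually_mixDirac_apply_ne hvalues 0 hβ0 hβ1, Ioo_mem_nhdsGT one_pos,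
      Ioo_mem_nhdsGT (by positivity : 0 < δ / (2 * (M + 1)))]
      with ε hne ⟨hε0, hε1⟩ ⟨_, hεM⟩ using ⟨hne, hε0, hε1, hεM⟩
  obtain ⟨ε, hne, hε0, hε1, hεM⟩ := hgood.exists
  have := Measure.isProbabilityMeasure_map (μ := μ) g.measurable.aemeasurable
  refine ⟨mixDirac (μ.map g) 0 ε, isProbabilityMeasure_mixDirac hε0.le hε1.le,
    (finiteSecondMoment_map_simpleFunc μ g).mixDirac 0 ε, ?_, hne⟩
  have hεM' : ε * M < δ / 2 := by
    rw [lt_div_iff₀ (by positivity)] at hεM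
    nlinarith
  calc W2sq (mixDirac (μ.map g) 0 ε) μ ≤ ∫ y, ‖y - g y‖ ^ 2 ∂μ + ε * M :=
        W2sq_mixDirac_map_le μ hμ g.measurable hgint hε0.le hε1.le
    _ < δ / 2 + δ / 2 := add_lt_add hglt hεM'
    _ = δ := add_halves δ

theorem stmt13_general {d : ℕ} (ν : Measure (Ed d)) [IsProbabilityMeasure ν]
    (hnotdirac : ¬ ∃ x : Ed d, ν = Measure.dirac x)
    (μ : Measure (Ed d)) [IsProbabilityMeasure μ] (hμ : FiniteSecondMoment μ) :
    ∃ μs : ℕ → Measure (Ed d),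
      (∀ n, IsProbabilityMeasure (μs n) ∧ FiniteSecondMoment (μs n)) ∧
      Tendsto (fun n => W2sq (μs n) μ) atTop (nhds 0) ∧
      ∀ n, ¬ ∃ T : Ed d → Ed d, Measurable T ∧
        {π | IsOptimalCoupling π (μs n) ν} = {givenByMap (μs n) T} := by
  obtain ⟨B, hB, hB0, hB1⟩ := ν.exists_measurableSet_measure_pos_lt_one hnotdirac
  choose μs hprob hmoment hW2 hne using fun n : ℕ =>
    exists_W2sq_lt_forall_measure_ne μ hμ hB0 hB1 (Nat.one_div_pos_of_nat (n := n))
  refine ⟨μs, fun n => ⟨hprob n, hmoment n⟩, ?_, ?_⟩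
  · exact squeeze_zero (fun n => W2sq_nonneg _ _) (fun n => (hW2 n).le)
      tendsto_one_div_add_atTop_nhds_zero_nat
  · rintro n ⟨T, hT, hopt⟩
    have hoptimal : IsOptimalCoupling (givenByMap (μs n) T) (μs n) ν := (Set.ext_iff.1 hopt _).2 rfl
    exact hne n (T ⁻¹' B) (hT hB) <| by
      rw [← Measure.map_apply hT hB, hoptimal.1.map_eq_of_givenByMap hT]

/-- If ν is not a Dirac mass, every μ can be W₂-approximated by measures μₙ for which no
optimal transport map to ν exists. -/
theorem stmt13 {d : ℕ} (ν : Measure (Ed d)) [IsProbabilityMeasure ν]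
    (hν : FiniteSecondMoment ν) (hnotdirac : ¬ ∃ x : Ed d, ν = Measure.dirac x)
    (μ : Measure (Ed d)) [IsProbabilityMeasure μ] (hμ : FiniteSecondMoment μ) :
    ∃ μs : ℕ → Measure (Ed d),
      (∀ n, IsProbabilityMeasure (μs n) ∧ FiniteSecondMoment (μs n)) ∧
      Tendsto (fun n => W2sq (μs n) μ) atTop (nhds 0) ∧
      ∀ n, ¬ ∃ T : Ed d → Ed d, Measurable T ∧
        {π | IsOptimalCoupling π (μs n) ν} = {givenByMap (μs n) T} :=
  stmt13_general ν hnotdirac μ hμ
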